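/- arXiv:1606.08130 — 2 statements merged into one kernel-verified Lean document; each statement's English description precedes it below -/
import Mathlib

section
/- If P is a σ_{Q≡R}E-propagator and Θ ⊨ Q≡R (i.e., the selection σ_{Q≡R}(σ_Θ E) = σ_Θ E), then σ_{Q≡R}P is also a σ_Θ E-propagator, and for all partial structures J, (σ_{Q≡R}P)(J) ≥_p P(J). -/
/-- Truth values: encoded as pairs of `Prop` with the product order.
`u = (False,False)`, `t = (True,False)`, `f = (False,True)`, `i = (True,True)`;
the order is exactly the precision order generated by `u < t < i`, `u < f < i`. -/
abbrev TV := Prop × Prop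

def TV.u : TV := (False, False)
def TV.t : TV := (True, False)
def TV.f : TV := (False, True)
def TV.i : TV := (True, True)

/-- Four-valued structures over a set `D` of domain atoms, ordered pointwise. -/
abbrev PStruct (D : Type) := D → TV

def TwoValued {D : Type} (J : PStruct D) : Prop := ∀ a, J a = TV.t ∨ J a = TV.f

def Consistent {D : Type} (J : PStruct D) : Prop := ∀ a, J a ≠ TV.i

/-- A propagator: monotone and information-preserving. -/
def IsPropagator {D : Type} (P : PStruct D → PStruct D) : Prop :=
  Monotone P ∧ ∀ J, J ≤ P J

/-- `P` is an `E`-propagator: on two-valued structures it coincides with `E`. -/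
def IsEPropagator {D : Type} (P : PStruct D → PStruct D) (E : Set (PStruct D)) : Prop :=
  IsPropagator P ∧ ∀ I, TwoValued I → (P I = I ↔ I ∈ E)

/-- The selection module `σ_{Q≡R} E`: models of `E` interpreting `Q` and `R` equally.
Atoms `Q(d)` and `R(d)` are given by the maps `Qa Ra : T → D` from tuples to atoms. -/
def selModule {D T : Type} (Qa Ra : T → D) (E : Set (PStruct D)) : Set (PStruct D) :=
  {I | I ∈ E ∧ ∀ d, I (Qa d) = I (Ra d)}

/-- The selection propagator `σ_{Q≡R} P`: propagate with `P`, then interpret, for each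
tuple `d`, both `Q(d)` and `R(d)` as the lub of their values in `P J`. -/
noncomputable def selProp {D T : Type} (Qa Ra : T → D) (P : PStruct D → PStruct D)
    (J : PStruct D) : PStruct D :=
  fun a => P J a ⊔ ⨆ d ∈ {d | Qa d = a ∨ Ra d = a}, (P J (Qa d) ⊔ P J (Ra d))

/-! Since `σ_{Q≡R}P` only adds information to `P`, a fixpoint of it is a fixpoint of `P`; at
a fixpoint `I` of `P` it moreover forces `I (Q d) ⊔ I (R d) ≤ I (Q d) ⊓ I (R d)`, i.e.
`I (Q d) = I (R d)`. So `σ_{Q≡R}P` is a `σ_{Q≡R}M`-propagator, and `σ_{Q≡R}M = M`. -/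

section SelProp

variable {D T : Type} (Qa Ra : T → D) {P : PStruct D → PStruct D}

theorem le_selProp (P : PStruct D → PStruct D) (J : PStruct D) : P J ≤ selProp Qa Ra P J :=
  fun _ => le_sup_left

theorem selProp_le_iff {J K : PStruct D} :
    selProp Qa Ra P J ≤ K ↔
      P J ≤ K ∧ ∀ d, P J (Qa d) ⊔ P J (Ra d) ≤ K (Qa d) ⊓ K (Ra d) := by
  simp only [selProp, Pi.le_def, sup_le_iff, iSup_le_iff, le_inf_iff, Set.mem_ofPred_eq]
  constructor
  · intro h
    exact ⟨fun a => (h a).1, fun d => ⟨(h _).2 d (.inl rfl), (h _).2 d (.inr rfl)⟩⟩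
  · rintro ⟨hPK, hQR⟩ a
    refine ⟨hPK a, fun d hd => ?_⟩
    rcases hd with rfl | rfl
    exacts [(hQR d).1, (hQR d).2]

theorem selProp_monotone (hP : Monotone P) : Monotone (selProp Qa Ra P) :=
  fun _ _ h a => sup_le_sup (hP h a)
    (iSup₂_mono fun _ _ => sup_le_sup (hP h _) (hP h _))

theorem IsPropagator.selProp (hP : IsPropagator P) : IsPropagator (selProp Qa Ra P) :=
  ⟨selProp_monotone Qa Ra hP.1, fun J => (hP.2 J).trans (le_selProp Qa Ra P J)⟩

theorem selProp_eq_self_iff (hP : ∀ J, J ≤ P J) {I : PStruct D} :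
    selProp Qa Ra P I = I ↔ P I = I ∧ ∀ d, I (Qa d) = I (Ra d) := by
  have hPI : I ≤ P I := hP I
  have hsel : I ≤ selProp Qa Ra P I := hPI.trans (le_selProp Qa Ra P I)
  rw [← hsel.ge_iff_eq', ← hPI.ge_iff_eq', selProp_le_iff]
  constructor
  · rintro ⟨hPle, hQR⟩
    refine ⟨hPle, fun d => sup_le_inf.mp ?_⟩
    simpa only [le_antisymm hPle hPI] using hQR d
  · rintro ⟨hPle, hQR⟩
    refine ⟨hPle, fun d => ?_⟩
    rw [le_antisymm hPle hPI, hQR d, sup_idem, inf_idem]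

theorem IsEPropagator.selProp {E : Set (PStruct D)} (hP : IsEPropagator P E) :
    IsEPropagator (selProp Qa Ra P) (selModule Qa Ra E) := by
  refine ⟨hP.1.selProp Qa Ra, fun I hI => ?_⟩
  rw [selProp_eq_self_iff Qa Ra hP.1.2, hP.2 I hI]
  rfl

end SelProp

/-- If `P` is an `M`-propagator for a module `M` with `σ_{Q≡R} M = M` (i.e. `Θ ⊨ Q≡R`
for `M = σ_Θ E`), then `σ_{Q≡R} P` is also an `M`-propagator and is at least as
precise as `P`. -/
theorem selection_equality_reasoning {D T : Type} (Qa Ra : T → D)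
    (P : PStruct D → PStruct D) (M : Set (PStruct D))
    (hP : IsEPropagator P M) (hTheta : selModule Qa Ra M = M) :
    IsEPropagator (selProp Qa Ra P) M ∧ ∀ J, P J ≤ selProp Qa Ra P J :=
  ⟨hTheta ▸ hP.selProp Qa Ra, le_selProp Qa Ra P⟩
end

section
/- The projection propagator π_δ P — defined by π_δP(J) = ⊤ if J is inconsistent; π_δP(J) = ⊤ if J is two-valued on δ and no two-valued model of E extends J|_δ; and π_δP(J) = lub_{≤_p}( P(J|_δ)|_δ , J|_{τ∖δ} ) otherwise — is a π_δE-propagator whenever P is an E-propagator. -/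
-- Restriction `J|_δ`: agrees with `J` on atoms of predicates in `δ`, `u` elsewhere.
open Classical in
noncomputable def restrict {D τ : Type} (pred : D → τ) (δ : Set τ)
    (J : PStruct D) : PStruct D :=
  fun a => if pred a ∈ δ then J a else TV.u

/-- `J` is two-valued on the sub-vocabulary `δ`. -/
def TwoValuedOn {D τ : Type} (pred : D → τ) (δ : Set τ) (J : PStruct D) : Prop :=
  ∀ a, pred a ∈ δ → (J a = TV.t ∨ J a = TV.f)

/-- The projected module `π_δ E`. -/
def projModule {D τ : Type} (pred : D → τ) (δ : Set τ)
    (E : Set (PStruct D)) : Set (PStruct D) :=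
  {I | TwoValued I ∧ ∃ I' ∈ E, restrict pred δ I = restrict pred δ I'}

-- The projection propagator `π_δ P`.
open Classical in
noncomputable def projProp {D τ : Type} (pred : D → τ) (δ : Set τ)
    (P : PStruct D → PStruct D) (J : PStruct D) : PStruct D :=
  if ¬ Consistent J then ⊤
  else if TwoValuedOn pred δ J ∧
      ¬ ∃ I, TwoValued I ∧ P I = I ∧ restrict pred δ J ≤ I then ⊤
  else restrict pred δ (P (restrict pred δ J)) ⊔ restrict pred δᶜ J

/- ## Auxiliary lemmas -/

lemma tv_le_iff (x y : TV) : x ≤ y ↔ (x.1 → y.1) ∧ (x.2 → y.2) := by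
  simp [Prod.le_def, le_Prop_eq]

lemma tv_eq (x y : TV) (h1 : x.1 ↔ y.1) (h2 : x.2 ↔ y.2) : x = y := by
  have := propext h1; have := propext h2
  exact Prod.ext ‹_› ‹_›

lemma tv_top : (⊤ : TV) = TV.i := by
  apply tv_eq <;> simp [TV.i] <;> exact _root_.trivial

lemma tv_u_le (x : TV) : TV.u ≤ x := by rw [tv_le_iff]; exact ⟨False.elim, False.elim⟩

lemma tv_i_of_le (y : TV) (h : TV.i ≤ y) : y = TV.i := by
  rw [tv_le_iff] at h
  simp [TV.i] at h
  exact tv_eq y TV.i (by simp [TV.i, h.1]) (by simp [TV.i, h.2])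

lemma tv_tv_of_le (x y : TV) (hx : x = TV.t ∨ x = TV.f) (hy : y ≠ TV.i)
    (h : x ≤ y) : y = x := by
  rw [tv_le_iff] at h
  rcases hx with rfl | rfl
  · simp [TV.t] at h
    apply tv_eq <;> simp [TV.t, h]
    intro h2
    exact hy (tv_eq _ _ (by simp [TV.i, h]) (by simp [TV.i, h2]))
  · simp [TV.f] at h
    apply tv_eq <;> simp [TV.f, h]
    intro h1
    exact hy (tv_eq _ _ (by simp [TV.i, h1]) (by simp [TV.i, h]))

lemma tv_sup_u (x : TV) : x ⊔ TV.u = x := by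
  apply tv_eq <;> simp [TV.u, Prod.sup_def, sup_Prop_eq]

lemma tv_u_sup (x : TV) : TV.u ⊔ x = x := by rw [sup_comm]; exact tv_sup_u x

lemma tv_ne_i_of_two (x : TV) (hx : x = TV.t ∨ x = TV.f) : x ≠ TV.i := by
  rcases hx with rfl | rfl <;> intro h <;>
    simpa [TV.t, TV.f, TV.i, Prod.ext_iff, eq_iff_iff] using h

lemma restrict_mono {D τ : Type} (pred : D → τ) (δ : Set τ) :
    Monotone (restrict pred δ) := by
  intro J1 J2 h a
  unfold restrict
  split
  · exact h a
  · exact le_refl _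

lemma restrict_le {D τ : Type} (pred : D → τ) (δ : Set τ) (J : PStruct D) :
    restrict pred δ J ≤ J := by
  intro a
  unfold restrict
  split
  · exact le_refl _
  · exact tv_u_le _

lemma restrict_apply_mem {D τ : Type} (pred : D → τ) (δ : Set τ) (J : PStruct D)
    {a : D} (h : pred a ∈ δ) : restrict pred δ J a = J a := by
  unfold restrict; rw [if_pos h]

lemma restrict_apply_not_mem {D τ : Type} (pred : D → τ) (δ : Set τ) (J : PStruct D)
    {a : D} (h : pred a ∉ δ) : restrict pred δ J a = TV.u := by
  unfold restrict; rw [if_neg h]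

/-- On a consistent extension of a `δ`-two-valued structure, the `δ`-restrictions agree. -/
lemma restrict_eq_of_le {D τ : Type} (pred : D → τ) (δ : Set τ)
    {J1 J2 : PStruct D} (h : J1 ≤ J2) (h1 : TwoValuedOn pred δ J1)
    (h2 : Consistent J2) : restrict pred δ J1 = restrict pred δ J2 := by
  funext a
  by_cases hp : pred a ∈ δ
  · rw [restrict_apply_mem _ _ _ hp, restrict_apply_mem _ _ _ hp]
    exact (tv_tv_of_le _ _ (h1 a hp) (h2 a) (h a)).symm
  · rw [restrict_apply_not_mem _ _ _ hp, restrict_apply_not_mem _ _ _ hp]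

/-- If `P` is an `E`-propagator, then `π_δ P` is a `π_δ E`-propagator. -/
theorem projection_EPropagator {D τ : Type} [Nonempty D] (pred : D → τ)
    (δ : Set τ) (P : PStruct D → PStruct D) (E : Set (PStruct D))
    (hE : ∀ I ∈ E, TwoValued I) (hP : IsEPropagator P E) :
    IsEPropagator (projProp pred δ P) (projModule pred δ E) := by
  obtain ⟨⟨Pmono, Ple⟩, Pfix⟩ := hP
  refine ⟨⟨?_, ?_⟩, ?_⟩
  · -- Monotone
    intro J1 J2 h
    by_cases hc2 : Consistent J2
    swap
    · have h2top : projProp pred δ P J2 = ⊤ := by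
        unfold projProp; rw [if_pos hc2]
      rw [h2top]; exact le_top
    have hc1 : Consistent J1 := by
      intro a ha
      exact hc2 a (tv_i_of_le _ (ha ▸ h a))
    by_cases hcond2 : TwoValuedOn pred δ J2 ∧
        ¬ ∃ I, TwoValued I ∧ P I = I ∧ restrict pred δ J2 ≤ I
    · have h2top : projProp pred δ P J2 = ⊤ := by
        unfold projProp; rw [if_neg (not_not_intro hc2), if_pos hcond2]
      rw [h2top]; exact le_top
    have hcond1 : ¬ (TwoValuedOn pred δ J1 ∧
        ¬ ∃ I, TwoValued I ∧ P I = I ∧ restrict pred δ J1 ≤ I) := by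
      rintro ⟨htv1, hne1⟩
      have heq : restrict pred δ J1 = restrict pred δ J2 :=
        restrict_eq_of_le pred δ h htv1 hc2
      refine hcond2 ⟨?_, by rwa [heq] at hne1⟩
      intro a hp
      have h2eq : J2 a = J1 a := tv_tv_of_le _ _ (htv1 a hp) (hc2 a) (h a)
      rw [h2eq]; exact htv1 a hp
    unfold projProp
    rw [if_neg (not_not_intro hc1), if_neg (not_not_intro hc2),
      if_neg hcond1, if_neg hcond2]
    exact sup_le_sup (restrict_mono pred δ (Pmono (restrict_mono pred δ h)))
      (restrict_mono pred δᶜ h)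
  · -- information-preserving
    intro J
    by_cases hc : Consistent J
    swap
    · unfold projProp; rw [if_pos hc]; exact le_top
    by_cases hcond : TwoValuedOn pred δ J ∧
        ¬ ∃ I, TwoValued I ∧ P I = I ∧ restrict pred δ J ≤ I
    · unfold projProp; rw [if_neg (not_not_intro hc), if_pos hcond]; exact le_top
    unfold projProp
    rw [if_neg (not_not_intro hc), if_neg hcond]
    intro a
    rw [Pi.sup_apply]
    by_cases hp : pred a ∈ δ
    · refine le_sup_of_le_left ?_
      rw [restrict_apply_mem _ _ _ hp]
      calc J a = restrict pred δ J a := (restrict_apply_mem _ _ _ hp).symm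
        _ ≤ P (restrict pred δ J) a := Ple _ a
    · refine le_sup_of_le_right ?_
      rw [restrict_apply_mem pred δᶜ J hp]
  · -- fixpoint characterization
    intro I hI
    have hIc : Consistent I := fun a => tv_ne_i_of_two _ (hI a)
    have hItv : TwoValuedOn pred δ I := fun a _ => hI a
    by_cases hex : ∃ I₀, TwoValued I₀ ∧ P I₀ = I₀ ∧ restrict pred δ I ≤ I₀
    · obtain ⟨I₀, hI₀tv, hI₀fix, hI₀le⟩ := hex
      have hI₀E : I₀ ∈ E := (Pfix I₀ hI₀tv).mp hI₀fix
      have heq : restrict pred δ I = restrict pred δ I₀ := by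
        funext a
        by_cases hp : pred a ∈ δ
        · rw [restrict_apply_mem _ _ _ hp, restrict_apply_mem _ _ _ hp]
          have := hI₀le a
          rw [restrict_apply_mem _ _ _ hp] at this
          exact (tv_tv_of_le _ _ (hI a) (tv_ne_i_of_two _ (hI₀tv a)) this).symm
        · rw [restrict_apply_not_mem _ _ _ hp, restrict_apply_not_mem _ _ _ hp]
      constructor
      · intro _; exact ⟨hI, I₀, hI₀E, heq⟩
      · intro _
        have hcond : ¬ (TwoValuedOn pred δ I ∧
            ¬ ∃ I₁, TwoValued I₁ ∧ P I₁ = I₁ ∧ restrict pred δ I ≤ I₁) :=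
          fun hc => hc.2 ⟨I₀, hI₀tv, hI₀fix, hI₀le⟩
        have hform : projProp pred δ P I
            = restrict pred δ (P (restrict pred δ I)) ⊔ restrict pred δᶜ I := by
          unfold projProp; rw [if_neg (not_not_intro hIc), if_neg hcond]
        rw [hform]
        funext a
        rw [Pi.sup_apply]
        by_cases hp : pred a ∈ δ
        · rw [restrict_apply_mem _ _ _ hp, restrict_apply_not_mem pred δᶜ I (not_not_intro hp), tv_sup_u]
          have hle1 : I a ≤ P (restrict pred δ I) a := by
            calc I a = restrict pred δ I a := (restrict_apply_mem _ _ _ hp).symm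
              _ ≤ P (restrict pred δ I) a := Ple _ a
          have hle2 : P (restrict pred δ I) a ≤ I a := by
            have hm : P (restrict pred δ I) ≤ P I₀ := Pmono hI₀le
            have hIa : I₀ a = I a := by
              have := congrFun heq a
              rw [restrict_apply_mem _ _ _ hp, restrict_apply_mem _ _ _ hp] at this
              exact this.symm
            calc P (restrict pred δ I) a ≤ P I₀ a := hm a
              _ = I₀ a := by rw [hI₀fix]
              _ = I a := hIa
          exact le_antisymm hle2 hle1
        · rw [restrict_apply_not_mem _ _ _ hp, restrict_apply_mem pred δᶜ I hp, tv_u_sup]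
    · constructor
      · intro hfix
        exfalso
        have htop : projProp pred δ P I = ⊤ := by
          unfold projProp; rw [if_neg (not_not_intro hIc), if_pos ⟨hItv, hex⟩]
        rw [htop] at hfix
        obtain ⟨a⟩ := ‹Nonempty D›
        have := congrFun hfix a
        rw [Pi.top_apply, tv_top] at this
        exact tv_ne_i_of_two _ (hI a) this.symm
      · rintro ⟨_, I', hI'E, hI'eq⟩
        exfalso
        refine hex ⟨I', hE I' hI'E, (Pfix I' (hE I' hI'E)).mpr hI'E, ?_⟩
        rw [hI'eq]
        exact restrict_le pred δ I'
end
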